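/- arXiv:2004.05308 — 2 statements merged into one kernel-verified Lean document; each statement's English description precedes it below -/
import Mathlib

section
/- Let X₁,…,Xₙ be i.i.d. with CDF F and let X_{l:n} ≤ X_{r:n} be the l-th and r-th order statistics with l < r, and fix 0 < T₁ < T₂. Define the test duration ξ = min( max(X_{l:n}, T₂), max(X_{r:n}, T₁) ). Then E[ξ] = E[X_{l:n}] + T₁ + E[min(X_{r:n},T₂)] - E[min(X_{l:n},T₂)] - E[min(X_{r:n},T₁)], provided all expectations are finite. -/
open MeasureTheory

theorem min_max_eq_add_sub_min {α : Type*} [AddCommGroup α] [LinearOrder α]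
    [IsOrderedAddMonoid α] {a b t₁ t₂ : α} (hab : a ≤ b) (ht : t₁ ≤ t₂) :
    min (max a t₂) (max b t₁) = a + t₁ + min b t₂ - min a t₂ - min b t₁ := by
  grind

theorem expected_duration_typeII_UHCS_general {Ω : Type*} [MeasurableSpace Ω]
    (μ : Measure Ω) [IsProbabilityMeasure μ] (Xl Xr : Ω → ℝ) (T₁ T₂ : ℝ)
    (hle : ∀ ω, Xl ω ≤ Xr ω) (hT : T₁ < T₂)
    (hXl : Integrable Xl μ) (hXr : Integrable Xr μ) :
    ∫ ω, min (max (Xl ω) T₂) (max (Xr ω) T₁) ∂μ =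
      ∫ ω, Xl ω ∂μ + T₁ + ∫ ω, min (Xr ω) T₂ ∂μ
        - ∫ ω, min (Xl ω) T₂ ∂μ - ∫ ω, min (Xr ω) T₁ ∂μ := by
  simp_rw [min_max_eq_add_sub_min (hle _) hT.le]
  have hXr₂ : Integrable (fun ω => min (Xr ω) T₂) μ := hXr.inf (integrable_const T₂)
  have hXl₂ : Integrable (fun ω => min (Xl ω) T₂) μ := hXl.inf (integrable_const T₂)
  have hXr₁ : Integrable (fun ω => min (Xr ω) T₁) μ := hXr.inf (integrable_const T₁)
  have hXlT₁ : Integrable (fun ω => Xl ω + T₁) μ := hXl.add (integrable_const T₁)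
  rw [integral_sub _ hXr₁, integral_sub _ hXl₂, integral_add hXlT₁ hXr₂,
    integral_add hXl (integrable_const T₁), integral_const]
  · simp
  · exact hXlT₁.add hXr₂
  · exact (hXlT₁.add hXr₂).sub hXl₂

/-- Expected duration of a Type-II unified hybrid censored life test.  Here `Xl` and `Xr`
denote the `l`-th and `r`-th order statistics (so `Xl ≤ Xr` pointwise) of an i.i.d. sample,
`0 < T₁ < T₂` are the two censoring times, and the test duration is
`ξ = min(max(Xl,T₂), max(Xr,T₁))`.  Then
`E[ξ] = E[Xl] + T₁ + E[min(Xr,T₂)] - E[min(Xl,T₂)] - E[min(Xr,T₁)]`. -/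
theorem expected_duration_typeII_UHCS {Ω : Type*} [MeasurableSpace Ω]
    (μ : Measure Ω) [IsProbabilityMeasure μ] (Xl Xr : Ω → ℝ) (T₁ T₂ : ℝ)
    (hle : ∀ ω, Xl ω ≤ Xr ω) (hT₁ : 0 < T₁) (hT : T₁ < T₂)
    (hXl : Integrable Xl μ) (hXr : Integrable Xr μ) :
    ∫ ω, min (max (Xl ω) T₂) (max (Xr ω) T₁) ∂μ =
      ∫ ω, Xl ω ∂μ + T₁ + ∫ ω, min (Xr ω) T₂ ∂μ
        - ∫ ω, min (Xl ω) T₂ ∂μ - ∫ ω, min (Xr ω) T₁ ∂μ :=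
  expected_duration_typeII_UHCS_general μ Xl Xr T₁ T₂ hle hT hXl hXr
end

section
/- Let l < r ≤ n, T₁ < T₂, and define the Type-II unified hybrid censoring number of failures D = #{i : X_{i:n} ≤ ξ} where ξ = min( max(X_{l:n}, T₂), max(X_{r:n}, T₁) ). Then E[D] = l + n·F(T₁) + Σ_{i=1}^{r} F_{i:n}(T₂) - Σ_{i=1}^{l} F_{i:n}(T₂) - Σ_{i=1}^{r} F_{i:n}(T₁), assuming F is continuous. -/
/-!
Write `N t = #{j | X j ≤ t}`. Then `X_{i:n} ≤ t ↔ i ≤ N t`, so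
`#{i ≤ k | X_{i:n} ≤ t} = min k (N t)`, and since independence and continuity of `F` rule out
ties almost surely, `N X_{i:n} = i` a.s. As `N` is monotone,
`D = N ξ = min (max l (N T₂)) (max r (N T₁))`, and because `N T₁ ≤ N T₂` and `l ≤ r` this is
`l + N T₁ + min r (N T₂) - min l (N T₂) - min r (N T₁)` (the additive rule
`D(S ∧ Q) = D(S) + D(Q) - D(S ∨ Q)`). Taking expectations, `E[N T₁] = n F(T₁)` and
`E[min k (N t)] = ∑_{i ≤ k} F_{i:n}(t)`.
-/

open MeasureTheory ProbabilityTheory Finset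

/-- The `i`-th order statistic (1-indexed) of the sample `X₁,…,Xₙ`:
the `i`-th smallest of the values `X j ω`. -/
noncomputable def orderStat {Ω : Type*} (n : ℕ) (X : Fin n → Ω → ℝ) (i : ℕ) (ω : Ω) : ℝ :=
  ((List.ofFn fun j => X j ω).insertionSort (· ≤ ·)).getD (i - 1) 0

namespace List

variable {α : Type*} [LinearOrder α]

theorem Pairwise.getElem_le_iff_lt_countP {s : List α} (hs : s.Pairwise (· ≤ ·)) (t : α)
    {j : ℕ} (hj : j < s.length) : s[j] ≤ t ↔ j < s.countP (· ≤ t) := by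
  induction s generalizing j with
  | nil => simp at hj
  | cons a s ih =>
    rw [pairwise_cons] at hs
    by_cases ha : a ≤ t
    · cases j with
      | zero => simp [ha]
      | succ j => simp [ha, ih hs.2 (Nat.lt_of_succ_lt_succ hj)]
    · have hs_gt : ∀ x ∈ s, ¬x ≤ t := fun x hx hxt => ha ((hs.1 x hx).trans hxt)
      have hzero : s.countP (· ≤ t) = 0 := countP_eq_zero.2 (by simpa using hs_gt)
      cases j with
      | zero => simp [ha, hzero]
      | succ j => simp [ha, hzero, hs_gt _ (getElem_mem _)]

theorem Pairwise.countP_le_getElem {s : List α} (hs : s.Pairwise (· < ·)) {j : ℕ}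
    (hj : j < s.length) : s.countP (· ≤ s[j]) = j + 1 := by
  induction s generalizing j with
  | nil => simp at hj
  | cons a s ih =>
    rw [pairwise_cons] at hs
    cases j with
    | zero =>
      have hzero : s.countP (· ≤ a) = 0 :=
        countP_eq_zero.2 fun x hx => by simpa using hs.1 x hx
      simp [hzero]
    | succ j =>
      simp [ih hs.2 (Nat.lt_of_succ_lt_succ hj), (hs.1 _ (getElem_mem _)).le]

end List

theorem List.countP_ofFn {α : Type*} {n : ℕ} (f : Fin n → α) (p : α → Prop)
    [DecidablePred p] :
    (List.ofFn f).countP (fun a => decide (p a)) = #{j | p (f j)} := by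
  rw [← Multiset.coe_countP, ← Fin.univ_val_map, Multiset.countP_map, card_def, filter_val]

section OrderStatistics

variable {Ω : Type*} {n : ℕ} (X : Fin n → Ω → ℝ) (ω : Ω)

theorem orderStat_le_iff {i : ℕ} (hi : 1 ≤ i) (hin : i ≤ n) (t : ℝ) :
    orderStat n X i ω ≤ t ↔ i ≤ #{j | X j ω ≤ t} := by
  have hlen : ((List.ofFn fun j => X j ω).insertionSort (· ≤ ·)).length = n := by simp
  rw [orderStat, List.getD_eq_getElem _ _ (by omega),
    (List.pairwise_insertionSort _ _).getElem_le_iff_lt_countP,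
    (List.perm_insertionSort _ _).countP_eq, List.countP_ofFn]
  omega

theorem card_le_orderStat (hinj : Function.Injective (X · ω)) {i : ℕ} (hi : 1 ≤ i)
    (hin : i ≤ n) : #{j | X j ω ≤ orderStat n X i ω} = i := by
  have hlen : ((List.ofFn fun j => X j ω).insertionSort (· ≤ ·)).length = n := by simp
  have hnodup : ((List.ofFn fun j => X j ω).insertionSort (· ≤ ·)).Nodup :=
    (List.perm_insertionSort _ _).nodup_iff.2 (List.nodup_ofFn.2 hinj)
  have hstrict :=
    ((List.pairwise_insertionSort _ _).and hnodup).imp fun h => lt_of_le_of_ne h.1 h.2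
  have hcount := hstrict.countP_le_getElem (j := i - 1) (by omega)
  rw [(List.perm_insertionSort _ _).countP_eq, List.countP_ofFn] at hcount
  rw [orderStat, List.getD_eq_getElem _ _ (by omega), hcount]
  omega

theorem card_filter_orderStat_le {k : ℕ} (hk : k ≤ n) (t : ℝ) :
    #{i ∈ Icc 1 k | orderStat n X i ω ≤ t} = min k #{j | X j ω ≤ t} := by
  have hIcc : {i ∈ Icc 1 k | orderStat n X i ω ≤ t} = Icc 1 (min k #{j | X j ω ≤ t}) := by
    ext i
    simp only [mem_filter, mem_Icc, le_min_iff]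
    exact ⟨fun ⟨⟨h1, h2⟩, h⟩ => ⟨h1, h2, (orderStat_le_iff X ω h1 (h2.trans hk) t).1 h⟩,
      fun ⟨h1, h2, h⟩ => ⟨⟨h1, h2⟩, (orderStat_le_iff X ω h1 (h2.trans hk) t).2 h⟩⟩
  rw [hIcc, Nat.card_Icc, Nat.add_sub_cancel]

-- Stated additively to avoid truncated subtraction in `ℕ`.
theorem card_le_min_max_orderStat_add (hinj : Function.Injective (X · ω)) {l r : ℕ}
    (hl : 1 ≤ l) (hlr : l ≤ r) (hrn : r ≤ n) {T₁ T₂ : ℝ} (hT : T₁ ≤ T₂) :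
    #{j | X j ω ≤ min (max (orderStat n X l ω) T₂) (max (orderStat n X r ω) T₁)}
        + #{i ∈ Icc 1 r | orderStat n X i ω ≤ T₁} + #{i ∈ Icc 1 l | orderStat n X i ω ≤ T₂} =
      l + #{j | X j ω ≤ T₁} + #{i ∈ Icc 1 r | orderStat n X i ω ≤ T₂} := by
  have hN : Monotone fun t => #{j | X j ω ≤ t} := fun a b hab =>
    card_le_card fun j => by simpa only [mem_filter] using And.imp_right fun h => h.trans hab
  have hD : #{j | X j ω ≤ min (max (orderStat n X l ω) T₂) (max (orderStat n X r ω) T₁)} =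
      min (max l #{j | X j ω ≤ T₂}) (max r #{j | X j ω ≤ T₁}) := by
    calc _ = min (max #{j | X j ω ≤ orderStat n X l ω} #{j | X j ω ≤ T₂})
          (max #{j | X j ω ≤ orderStat n X r ω} #{j | X j ω ≤ T₁}) :=
          hN.map_min.trans (congrArg₂ min hN.map_max hN.map_max)
      _ = _ := by
          rw [card_le_orderStat X ω hinj hl (hlr.trans hrn),
            card_le_orderStat X ω hinj (hl.trans hlr) hrn]
  rw [hD, card_filter_orderStat_le X ω (hlr.trans hrn), card_filter_orderStat_le X ω hrn,
    card_filter_orderStat_le X ω hrn]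
  have : #{j | X j ω ≤ T₁} ≤ #{j | X j ω ≤ T₂} := hN hT
  omega

end OrderStatistics

theorem card_filter_eq_sum_indicator {Ω ι : Type*} (s : Finset ι) {p : ι → Ω → Prop}
    [∀ i ω, Decidable (p i ω)] :
    (fun ω => (#{i ∈ s | p i ω} : ℝ)) = fun ω => ∑ i ∈ s, {ω | p i ω}.indicator 1 ω := by
  ext ω
  rw [natCast_card_filter]
  simp [Set.indicator_apply]

section Measure

variable {Ω : Type*} [MeasurableSpace Ω] {μ : Measure Ω}

theorem measurable_card_filter {ι : Type*} (s : Finset ι) {p : ι → Ω → Prop}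
    [∀ i ω, Decidable (p i ω)] (hp : ∀ i ∈ s, MeasurableSet {ω | p i ω}) :
    Measurable fun ω => #{i ∈ s | p i ω} := by
  simp_rw [card_filter]
  exact Finset.measurable_sum _ fun i hi =>
    Measurable.ite (hp i hi) measurable_const measurable_const

theorem integrable_card_filter [IsFiniteMeasure μ] {ι : Type*} (s : Finset ι)
    {p : ι → Ω → Prop} [∀ i ω, Decidable (p i ω)] (hp : ∀ i ∈ s, MeasurableSet {ω | p i ω}) :
    Integrable (fun ω => (#{i ∈ s | p i ω} : ℝ)) μ := by
  rw [card_filter_eq_sum_indicator]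
  exact integrable_finsetSum _ fun i hi => (integrable_const 1).indicator (hp i hi)

theorem integral_card_filter [IsFiniteMeasure μ] {ι : Type*} (s : Finset ι)
    {p : ι → Ω → Prop} [∀ i ω, Decidable (p i ω)] (hp : ∀ i ∈ s, MeasurableSet {ω | p i ω}) :
    ∫ ω, (#{i ∈ s | p i ω} : ℝ) ∂μ = ∑ i ∈ s, μ.real {ω | p i ω} := by
  rw [card_filter_eq_sum_indicator,
    integral_finsetSum _ fun i hi => (integrable_const 1).indicator (hp i hi)]
  exact sum_congr rfl fun i hi => integral_indicator_one (hp i hi)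

theorem measurableSet_orderStat_le {n : ℕ} {X : Fin n → Ω → ℝ} (hX : ∀ j, Measurable (X j))
    {i : ℕ} (hi : 1 ≤ i) (hin : i ≤ n) (t : ℝ) : MeasurableSet {ω | orderStat n X i ω ≤ t} := by
  simp_rw [orderStat_le_iff X _ hi hin]
  exact measurable_card_filter univ (fun j _ => measurableSet_le (hX j) measurable_const)
    measurableSet_Ici

theorem nullSingletonClass_of_continuous_cdf {ν : Measure ℝ} [IsProbabilityMeasure ν]
    (hν : Continuous (cdf ν)) : NullSingletonClass ν := by
  refine ⟨fun x => ?_⟩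
  rw [← measure_cdf ν, StieltjesFunction.measure_singleton,
    hν.continuousWithinAt.leftLim_eq, sub_self, ENNReal.ofReal_zero]

theorem nullSingletonClass_map_of_continuous [IsProbabilityMeasure μ] {X : Ω → ℝ}
    (hX : Measurable X) {F : ℝ → ℝ} (hF : ∀ s, (μ {ω | X ω ≤ s}).toReal = F s)
    (hcont : Continuous F) : NullSingletonClass (μ.map X) := by
  have := Measure.isProbabilityMeasure_map (μ := μ) hX.aemeasurable
  refine nullSingletonClass_of_continuous_cdf ?_
  convert hcont
  ext s
  rw [cdf_eq_real, measureReal_def, Measure.map_apply hX measurableSet_Iic]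
  exact hF s

theorem ProbabilityTheory.IndepFun.ae_ne [IsFiniteMeasure μ] {X Y : Ω → ℝ} (hX : Measurable X)
    (hY : Measurable Y) (hXY : IndepFun X Y μ) [NullSingletonClass (μ.map Y)] :
    ∀ᵐ ω ∂μ, X ω ≠ Y ω := by
  have hdiag : MeasurableSet {p : ℝ × ℝ | p.1 = p.2} :=
    measurableSet_eq_fun measurable_fst measurable_snd
  rw [ae_iff]
  simp only [ne_eq, not_not]
  calc μ {ω | X ω = Y ω} = μ.map (fun ω => (X ω, Y ω)) {p | p.1 = p.2} :=
        (Measure.map_apply (hX.prodMk hY) hdiag).symm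
    _ = ((μ.map X).prod (μ.map Y)) {p | p.1 = p.2} := by
        rw [(indepFun_iff_map_prod_eq_prod_map_map hX.aemeasurable hY.aemeasurable).1 hXY]
    _ = 0 := by
        rw [Measure.prod_apply hdiag]
        simp [Set.preimage]

theorem ProbabilityTheory.iIndepFun.ae_injective [IsFiniteMeasure μ] {ι : Type*}
    [Countable ι] {X : ι → Ω → ℝ} (hX : ∀ i, Measurable (X i)) (hindep : iIndepFun X μ)
    (hatoms : ∀ i, NullSingletonClass (μ.map (X i))) : ∀ᵐ ω ∂μ, Function.Injective (X · ω) := by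
  have : ∀ᵐ ω ∂μ, ∀ i j, i ≠ j → X i ω ≠ X j ω := by
    simpa only [ae_all_iff] using fun i j hij => (hindep.indepFun hij).ae_ne (hX i) (hX j)
  filter_upwards [this] with ω hω i j hij
  by_contra h
  exact hω i j h hij

end Measure

theorem expected_failures_typeII_UHCS_general {Ω : Type*} [MeasurableSpace Ω]
    (μ : Measure Ω) [IsProbabilityMeasure μ] (n l r : ℕ) (hl : 1 ≤ l) (hlr : l < r)
    (hrn : r ≤ n) (T₁ T₂ : ℝ) (hT : T₁ < T₂)
    (X : Fin n → Ω → ℝ) (F : ℝ → ℝ)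
    (hmeas : ∀ i, Measurable (X i))
    (hindep : iIndepFun X μ)
    (hF : ∀ i s, (μ {ω | X i ω ≤ s}).toReal = F s)
    (hcont : Continuous F) :
    ∫ ω, ((univ.filter fun i =>
        X i ω ≤ min (max (orderStat n X l ω) T₂) (max (orderStat n X r ω) T₁)).card : ℝ) ∂μ =
      l + n * F T₁ + ∑ i ∈ Icc 1 r, (μ {ω | orderStat n X i ω ≤ T₂}).toReal
        - ∑ i ∈ Icc 1 l, (μ {ω | orderStat n X i ω ≤ T₂}).toReal
        - ∑ i ∈ Icc 1 r, (μ {ω | orderStat n X i ω ≤ T₁}).toReal := by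
  have hinj : ∀ᵐ ω ∂μ, Function.Injective (X · ω) :=
    hindep.ae_injective hmeas fun i =>
      nullSingletonClass_map_of_continuous (hmeas i) (hF i) hcont
  have hD : (fun ω => ((univ.filter fun i =>
        X i ω ≤ min (max (orderStat n X l ω) T₂) (max (orderStat n X r ω) T₁)).card : ℝ)) =ᵐ[μ]
      fun ω => l + #{j | X j ω ≤ T₁} + #{i ∈ Icc 1 r | orderStat n X i ω ≤ T₂}
        - #{i ∈ Icc 1 l | orderStat n X i ω ≤ T₂} - #{i ∈ Icc 1 r | orderStat n X i ω ≤ T₁} := by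
    filter_upwards [hinj] with ω hω
    rw [eq_sub_iff_add_eq, eq_sub_iff_add_eq]
    exact_mod_cast card_le_min_max_orderStat_add X ω hω hl hlr.le hrn hT.le
  have hXle : ∀ t, ∀ j ∈ univ, MeasurableSet {ω | X j ω ≤ t} := fun t j _ =>
    measurableSet_le (hmeas j) measurable_const
  have hos : ∀ {k}, k ≤ n → ∀ t, ∀ i ∈ Icc 1 k, MeasurableSet {ω | orderStat n X i ω ≤ t} :=
    fun hk t i hi =>
      measurableSet_orderStat_le hmeas (mem_Icc.1 hi).1 ((mem_Icc.1 hi).2.trans hk) t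
  have hN₁ := integrable_card_filter (μ := μ) _ (hXle T₁)
  have hr₂ := integrable_card_filter (μ := μ) _ (hos hrn T₂)
  have hl₂ := integrable_card_filter (μ := μ) _ (hos (hlr.le.trans hrn) T₂)
  have hr₁ := integrable_card_filter (μ := μ) _ (hos hrn T₁)
  rw [integral_congr_ae hD, integral_sub, integral_sub, integral_add, integral_add, integral_const,
    integral_card_filter _ (hXle T₁), integral_card_filter _ (hos hrn T₂),
    integral_card_filter _ (hos (hlr.le.trans hrn) T₂), integral_card_filter _ (hos hrn T₁)]
  · simp [measureReal_def, hF]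
  all_goals fun_prop

/-- Expected number of failures under the Type-II unified hybrid censoring scheme:
with `l < r ≤ n`, `0 < T₁ < T₂`, stopping time
`ξ = min(max(X_{l:n},T₂), max(X_{r:n},T₁))` and `D = #{i : Xᵢ ≤ ξ}`, for an i.i.d.
sample with continuous common CDF `F`,
`E[D] = l + n·F(T₁) + ∑_{i=1}^{r} F_{i:n}(T₂) - ∑_{i=1}^{l} F_{i:n}(T₂) - ∑_{i=1}^{r} F_{i:n}(T₁)`. -/
theorem expected_failures_typeII_UHCS {Ω : Type*} [MeasurableSpace Ω]
    (μ : Measure Ω) [IsProbabilityMeasure μ] (n l r : ℕ) (hl : 1 ≤ l) (hlr : l < r)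
    (hrn : r ≤ n) (T₁ T₂ : ℝ) (hT₁ : 0 < T₁) (hT : T₁ < T₂)
    (X : Fin n → Ω → ℝ) (F : ℝ → ℝ)
    (hmeas : ∀ i, Measurable (X i))
    (hindep : iIndepFun X μ)
    (hF : ∀ i s, (μ {ω | X i ω ≤ s}).toReal = F s)
    (hcont : Continuous F) :
    ∫ ω, ((univ.filter fun i =>
        X i ω ≤ min (max (orderStat n X l ω) T₂) (max (orderStat n X r ω) T₁)).card : ℝ) ∂μ =
      l + n * F T₁ + ∑ i ∈ Icc 1 r, (μ {ω | orderStat n X i ω ≤ T₂}).toReal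
        - ∑ i ∈ Icc 1 l, (μ {ω | orderStat n X i ω ≤ T₂}).toReal
        - ∑ i ∈ Icc 1 r, (μ {ω | orderStat n X i ω ≤ T₁}).toReal :=
  expected_failures_typeII_UHCS_general μ n l r hl hlr hrn T₁ T₂ hT X F hmeas hindep hF hcont
end
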